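/- arXiv:2211.13598 — 5 statements merged into one kernel-verified Lean document; each statement's English description precedes it below -/
import Mathlib

section
/- For d ≥ 2 and T_d the degree-d Chebyshev polynomial characterized by T_d(x + x⁻¹) = x^d + x^{-d}, if ζ is a root of unity then the group G_∞(T_d, ζ + ζ⁻¹) is abelian; more precisely, every iterated preimage of ζ + ζ⁻¹ under T_d over Q is of the form η + η⁻¹ for some root of unity η, and hence lies in Q^ab. -/
/-!
Write every point as `w + w⁻¹`; then `T` acts as `w ↦ w ^ d`, so a `T`-preimage of `η + η⁻¹`
is `w + w⁻¹` with `w ^ d = η ^ {±1}`, and preimages of roots of unity stay roots of unity.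
Such a point `η + η⁻¹` lies in the cyclotomic field `ℚ(η)`. If `η` has order `k`, every
conjugate of `η + η⁻¹` is a root of the rational polynomial `D_k - 2`, where `D_m` is the Dickson
polynomial with `D_m(w + w⁻¹) = w ^ m + w⁻ᵐ`, hence equals `D_a(η + η⁻¹)` for some `a`.
Automorphisms thus act on each generator through the pairwise commuting polynomials `D_a`, so
they commute.
-/

open Polynomial

/-- `x : ℂ` lies in the maximal abelian extension `ℚ^ab` of `ℚ`. -/
def InQab (x : ℂ) : Prop :=
  ∃ F : IntermediateField ℚ ℂ, x ∈ F ∧ IsGalois ℚ F ∧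
    ∀ σ τ : F ≃ₐ[ℚ] F, σ * τ = τ * σ

section DicksonAddInv

variable {F L : Type*} [Field F] [Field L] [Algebra F L]

theorem eq_or_eq_inv_of_add_inv_eq {a b : L} (ha : a ≠ 0) (hb : b ≠ 0)
    (h : a + a⁻¹ = b + b⁻¹) : a = b ∨ a = b⁻¹ := by
  have key : (a - b) * (a * b - 1) = (a + a⁻¹ - (b + b⁻¹)) * (a * b) := by
    field_simp
    ring
  rw [h, sub_self, zero_mul] at key
  rcases mul_eq_zero.1 key with h1 | h1
  · exact Or.inl (sub_eq_zero.1 h1)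
  · exact Or.inr (eq_inv_of_mul_eq_one_left (sub_eq_zero.1 h1))

theorem aeval_add_inv_dickson {w : L} (hw : w ≠ 0) (m : ℕ) :
    aeval (w + w⁻¹) (dickson 1 (1 : F) m) = w ^ m + (w ^ m)⁻¹ := by
  rw [aeval_def, ← eval_map, map_dickson, map_one, ← inv_pow]
  exact dickson_one_one_eval_add_inv w w⁻¹ (mul_inv_cancel₀ hw) m

variable [IsAlgClosed L]

theorem exists_ne_zero_eq_add_inv (x : L) : ∃ w ≠ 0, x = w + w⁻¹ := by
  have hdeg : 0 < (X ^ 2 - C x * X + 1 : L[X]).degree := by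
    have h2 : (X ^ 2 - C x * X + 1 : L[X]).degree = 2 := by compute_degree!
    rw [h2]
    norm_num
  obtain ⟨w, hw⟩ := IsAlgClosed.exists_root _ hdeg.ne'
  have hw' : w ^ 2 - x * w + 1 = 0 := by simpa [IsRoot] using hw
  have hw0 : w ≠ 0 := by
    rintro rfl
    simp at hw'
  refine ⟨w, hw0, ?_⟩
  field_simp
  linear_combination -hw'

theorem exists_isOfFinOrder_eq_add_inv_of_aeval_eq {d : ℕ} (hd : d ≠ 0) {T : F[X]}
    (hT : ∀ x : L, x ≠ 0 → aeval (x + x⁻¹) T = x ^ d + x⁻¹ ^ d) {η γ : L}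
    (hη : IsOfFinOrder η) (hγ : aeval γ T = η + η⁻¹) :
    ∃ w : L, IsOfFinOrder w ∧ γ = w + w⁻¹ := by
  obtain ⟨w, hw0, rfl⟩ := exists_ne_zero_eq_add_inv γ
  rw [hT w hw0, inv_pow] at hγ
  obtain ⟨m, hm, hηm⟩ := isOfFinOrder_iff_pow_eq_one.1 hη
  have hη0 : η ≠ 0 := by
    rintro rfl
    simp [zero_pow hm.ne'] at hηm
  have hwdm : w ^ (d * m) = 1 := by
    rcases eq_or_eq_inv_of_add_inv_eq (pow_ne_zero d hw0) hη0 hγ with h | h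
    · rw [pow_mul, h, hηm]
    · rw [pow_mul, h, inv_pow, hηm, inv_one]
  exact ⟨w, isOfFinOrder_iff_pow_eq_one.2 ⟨d * m, by positivity, hwdm⟩, rfl⟩

theorem exists_isOfFinOrder_eq_add_inv_of_iterate_eq {d : ℕ} (hd : d ≠ 0) {T : F[X]}
    (hT : ∀ x : L, x ≠ 0 → aeval (x + x⁻¹) T = x ^ d + x⁻¹ ^ d) {ζ : L}
    (hζ : IsOfFinOrder ζ) (n : ℕ) {γ : L} (hγ : (fun z : L => aeval z T)^[n] γ = ζ + ζ⁻¹) :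
    ∃ η : L, IsOfFinOrder η ∧ γ = η + η⁻¹ := by
  induction n generalizing γ with
  | zero => exact ⟨ζ, hζ, hγ⟩
  | succ n ih =>
    rw [Function.iterate_succ_apply] at hγ
    obtain ⟨η, hη, hTγ⟩ := ih hγ
    exact exists_isOfFinOrder_eq_add_inv_of_aeval_eq hd hT hη hTγ

theorem IsPrimitiveRoot.exists_eq_pow_add_inv_of_aeval_dickson_eq_two {η : L} {k : ℕ}
    [NeZero k] (hη : IsPrimitiveRoot η k) {z : L} (hz : aeval z (dickson 1 (1 : F) k) = 2) :
    ∃ a : ℕ, z = η ^ a + (η ^ a)⁻¹ := by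
  obtain ⟨w, hw0, rfl⟩ := exists_ne_zero_eq_add_inv z
  rw [aeval_add_inv_dickson hw0, ← one_add_one_eq_two] at hz
  have hwk : w ^ k = 1 := by
    simpa using eq_or_eq_inv_of_add_inv_eq (pow_ne_zero k hw0) one_ne_zero (by simpa using hz)
  obtain ⟨a, -, rfl⟩ := hη.eq_pow_of_pow_eq_one hwk
  exact ⟨a, rfl⟩

theorem IsPrimitiveRoot.exists_algEquiv_apply_eq_aeval_dickson {K : IntermediateField F L}
    (υ : K ≃ₐ[F] K) {x : K} {η : L} {k : ℕ} [NeZero k] (hη : IsPrimitiveRoot η k)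
    (hx : (x : L) = η + η⁻¹) : ∃ a : ℕ, υ x = aeval x (dickson 1 (1 : F) a) := by
  have hη0 : η ≠ 0 := hη.ne_zero (NeZero.ne k)
  have hx2 : aeval x (dickson 1 (1 : F) k) = 2 := Subtype.ext <| by
    rw [← IntermediateField.aeval_coe, hx, aeval_add_inv_dickson hη0, hη.pow_eq_one,
      inv_one, one_add_one_eq_two]
    rfl
  have hroot : aeval ((υ x : K) : L) (dickson 1 (1 : F) k) = 2 := by
    rw [IntermediateField.aeval_coe, aeval_algHom_apply, hx2, map_ofNat]
    rfl
  obtain ⟨a, ha⟩ := hη.exists_eq_pow_add_inv_of_aeval_dickson_eq_two hroot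
  refine ⟨a, Subtype.ext ?_⟩
  rw [ha, ← IntermediateField.aeval_coe, hx, aeval_add_inv_dickson hη0]

theorem algEquiv_apply_comm_of_coe_eq_add_inv {K : IntermediateField F L} (σ τ : K ≃ₐ[F] K)
    {x : K} {η : L} (hη : IsOfFinOrder η) (hx : (x : L) = η + η⁻¹) : σ (τ x) = τ (σ x) := by
  have : NeZero (orderOf η) := ⟨hη.orderOf_pos.ne'⟩
  obtain ⟨a, ha⟩ := (IsPrimitiveRoot.orderOf η).exists_algEquiv_apply_eq_aeval_dickson σ hx
  obtain ⟨b, hb⟩ := (IsPrimitiveRoot.orderOf η).exists_algEquiv_apply_eq_aeval_dickson τ hx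
  rw [hb, ha, ← aeval_algHom_apply, ← aeval_algHom_apply, ha, hb, ← aeval_comp, ← aeval_comp,
    dickson_one_one_comp_comm]

theorem algEquiv_mul_comm_of_forall_eq_add_inv {S : Set L}
    (hS : ∀ γ ∈ S, ∃ η : L, IsOfFinOrder η ∧ γ = η + η⁻¹)
    (σ τ : IntermediateField.adjoin F S ≃ₐ[F] IntermediateField.adjoin F S) :
    σ * τ = τ * σ := by
  refine AlgEquiv.coe_toAlgHom_injective (IntermediateField.adjoin_algHom_ext F fun γ hγ => ?_)
  obtain ⟨η, hη, hγη⟩ := hS γ hγ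
  exact algEquiv_apply_comm_of_coe_eq_add_inv σ τ hη hγη

end DicksonAddInv

open scoped IntermediateField in
theorem IsOfFinOrder.inQab_add_inv {η : ℂ} (hη : IsOfFinOrder η) : InQab (η + η⁻¹) := by
  have : NeZero (orderOf η) := ⟨hη.orderOf_pos.ne'⟩
  have hprim := IsPrimitiveRoot.orderOf η
  have : IsCyclotomicExtension {orderOf η} ℚ ℚ⟮η⟯ := by
    change IsCyclotomicExtension {orderOf η} ℚ ℚ⟮η⟯.toSubalgebra
    rw [IntermediateField.adjoin_simple_toSubalgebra_of_isAlgebraic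
      ((hprim.isIntegral hη.orderOf_pos).tower_top.isAlgebraic)]
    exact hprim.adjoin_isCyclotomicExtension ℚ
  have hmem : η ∈ ℚ⟮η⟯ := IntermediateField.mem_adjoin_simple_self ℚ η
  exact ⟨ℚ⟮η⟯, add_mem hmem (inv_mem hmem), IsCyclotomicExtension.isGalois {orderOf η} ℚ _,
    (IsCyclotomicExtension.isMulCommutative {orderOf η} ℚ _).is_comm.comm⟩

theorem chebyshev_abelian_arboreal_general (d : ℕ) (hd : 2 ≤ d) (T : ℚ[X])
    (hT : ∀ x : ℂ, x ≠ 0 → aeval (x + x⁻¹) T = x ^ d + (x⁻¹) ^ d)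
    (ζ : ℂ) (hζ : ∃ m : ℕ, 1 ≤ m ∧ ζ ^ m = 1) :
    (∀ γ : ℂ, (∃ n : ℕ, (fun z : ℂ => aeval z T)^[n] γ = ζ + ζ⁻¹) →
      (∃ η : ℂ, (∃ m : ℕ, 1 ≤ m ∧ η ^ m = 1) ∧ γ = η + η⁻¹) ∧ InQab γ) ∧
    (∀ σ τ : (IntermediateField.adjoin ℚ
        {γ : ℂ | ∃ n : ℕ, (fun z : ℂ => aeval z T)^[n] γ = ζ + ζ⁻¹}) ≃ₐ[ℚ]
        (IntermediateField.adjoin ℚ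
        {γ : ℂ | ∃ n : ℕ, (fun z : ℂ => aeval z T)^[n] γ = ζ + ζ⁻¹}),
      σ * τ = τ * σ) := by
  have hpre : ∀ γ ∈ {γ : ℂ | ∃ n : ℕ, (fun z : ℂ => aeval z T)^[n] γ = ζ + ζ⁻¹},
      ∃ η : ℂ, IsOfFinOrder η ∧ γ = η + η⁻¹ := by
    rintro γ ⟨n, hn⟩
    exact exists_isOfFinOrder_eq_add_inv_of_iterate_eq (by omega) hT
      (isOfFinOrder_iff_pow_eq_one.2 hζ) n hn
  refine ⟨fun γ hγ => ?_, algEquiv_mul_comm_of_forall_eq_add_inv hpre⟩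
  obtain ⟨η, hη, rfl⟩ := hpre γ hγ
  exact ⟨⟨η, isOfFinOrder_iff_pow_eq_one.1 hη, rfl⟩, hη.inQab_add_inv⟩

/-- Let `T` be the degree-`d` Chebyshev polynomial (`d ≥ 2`), characterized by
`T(x + x⁻¹) = x^d + x^{-d}`. If `ζ` is a root of unity, then every iterated preimage of
`ζ + ζ⁻¹` under `T` is of the form `η + η⁻¹` for a root of unity `η`, hence lies in `ℚ^ab`,
and the dynamical Galois group `G_∞(T, ζ + ζ⁻¹)` over `ℚ` is abelian. -/
theorem chebyshev_abelian_arboreal (d : ℕ) (hd : 2 ≤ d) (T : ℚ[X])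
    (hTdeg : T.natDegree = d)
    (hT : ∀ x : ℂ, x ≠ 0 → aeval (x + x⁻¹) T = x ^ d + (x⁻¹) ^ d)
    (ζ : ℂ) (hζ : ∃ m : ℕ, 1 ≤ m ∧ ζ ^ m = 1) :
    (∀ γ : ℂ, (∃ n : ℕ, (fun z : ℂ => aeval z T)^[n] γ = ζ + ζ⁻¹) →
      (∃ η : ℂ, (∃ m : ℕ, 1 ≤ m ∧ η ^ m = 1) ∧ γ = η + η⁻¹) ∧ InQab γ) ∧
    (∀ σ τ : (IntermediateField.adjoin ℚ
        {γ : ℂ | ∃ n : ℕ, (fun z : ℂ => aeval z T)^[n] γ = ζ + ζ⁻¹}) ≃ₐ[ℚ]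
        (IntermediateField.adjoin ℚ
        {γ : ℂ | ∃ n : ℕ, (fun z : ℂ => aeval z T)^[n] γ = ζ + ζ⁻¹}),
      σ * τ = τ * σ) :=
  chebyshev_abelian_arboreal_general d hd T hT ζ hζ
end

section
/- Let Ω be the automorphism group of the infinite rooted binary tree, φ_n : Ω → F_2 the level-parity homomorphisms, and ψ : Ω → ∏_{n≥1} F_2 given by ψ(σ) = (φ_1(σ), φ_2(σ), ...). If σ, τ ∈ Ω satisfy φ_1(σ) = 1 and ψ(σ), ψ(τ) are linearly independent over F_2 in ∏_{n≥1} F_2, then σ and τ do not commute. -/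
/-!
Suppose `σ` swaps the two children of the root and commutes with `τ`. Comparing the swap
indicators of `στ = τσ` over the left half of a level shows that conjugation by `σ` matches the
swap indicators of `τ` in the left subtree with those in the right subtree. So if `τ` does not
swap the root, every level parity of `τ` is twice a half-level sum, and `ψ(τ) = 0`. If `τ` does
swap the root, the same argument applied to `στ` gives `ψ(σ) + ψ(τ) = 0`. Either way `ψ(τ)` is a
multiple of `ψ(σ)`.
-/

/-- A root-preserving automorphism of the infinite rooted binary tree, modeled as a
permutation of finite binary strings (`List Bool`) fixing the root and sending the two
children `s ++ [b]` of a vertex `s` to children of `σ s`. -/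
def IsTreeAut (σ : Equiv.Perm (List Bool)) : Prop :=
  σ [] = [] ∧ ∀ (s : List Bool) (b : Bool), ∃ b' : Bool, σ (s ++ [b]) = σ s ++ [b']

/-- The swap indicator `ε_v(σ) ∈ 𝔽₂` of `σ` at a vertex `v`: `1` if `σ` swaps the two
children of `v`, `0` otherwise. -/
def swapBit (σ : Equiv.Perm (List Bool)) (v : List Bool) : ZMod 2 :=
  if σ (v ++ [false]) = σ v ++ [false] then 0 else 1

/-- The level-`n` parity map `φ_n : Ω → 𝔽₂` (for `n ≥ 1`): the sum of the swap indicators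
of `σ` over all `2^(n-1)` vertices at level `n - 1`. -/
def phiLevel (n : ℕ) (σ : Equiv.Perm (List Bool)) : ZMod 2 :=
  ∑ v : Fin (n - 1) → Bool, swapBit σ (List.ofFn v)

/-- The product map `ψ = (φ_1, φ_2, …) : Ω → ∏_{n ≥ 1} 𝔽₂` (indexed so that entry `n` is
`φ_{n+1}`). -/
def psiMap (σ : Equiv.Perm (List Bool)) : ℕ → ZMod 2 :=
  fun n => phiLevel (n + 1) σ

def swapsAt (σ : Equiv.Perm (List Bool)) (v : List Bool) : Bool :=
  decide (σ (v ++ [false]) ≠ σ v ++ [false])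

theorem swapBit_eq_ite (σ : Equiv.Perm (List Bool)) (v : List Bool) :
    swapBit σ v = if swapsAt σ v then 1 else 0 := by
  unfold swapBit swapsAt
  split_ifs <;> simp_all

namespace IsTreeAut

variable {g h : Equiv.Perm (List Bool)}

theorem apply_append (hg : IsTreeAut g) (s : List Bool) (b : Bool) :
    g (s ++ [b]) = g s ++ [b ^^ swapsAt g s] := by
  obtain ⟨b₀, hb₀⟩ := hg.2 s false
  obtain ⟨b₁, hb₁⟩ := hg.2 s true
  have hswaps : swapsAt g s = b₀ := by cases b₀ <;> simp [swapsAt, hb₀]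
  have hne : b₁ ≠ b₀ := by
    rintro rfl
    simpa using g.injective (hb₁.trans hb₀.symm)
  cases b <;> cases b₀ <;> cases b₁ <;> simp_all

theorem length_apply (hg : IsTreeAut g) (s : List Bool) : (g s).length = s.length := by
  induction s using List.reverseRecOn with
  | nil => simp [hg.1]
  | append_singleton s b ih => simp [hg.apply_append, ih]

theorem head?_apply (hg : IsTreeAut g) (s : List Bool) :
    (g s).head? = s.head?.map (· ^^ swapsAt g []) := by
  induction s using List.reverseRecOn with
  | nil => simp [hg.1]
  | append_singleton s b ih =>
    rcases eq_or_ne s [] with rfl | hs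
    · simpa [hg.1] using congrArg List.head? (hg.apply_append [] b)
    · have hgs : g s ≠ [] := by
        rw [← List.length_pos_iff, hg.length_apply]; exact List.length_pos_iff.mpr hs
      simp [hg.apply_append, List.head?_append_of_ne_nil _ hgs,
        List.head?_append_of_ne_nil _ hs, ih]

theorem swapsAt_mul (hg : IsTreeAut g) (hh : IsTreeAut h) (v : List Bool) :
    swapsAt (g * h) v = (swapsAt h v ^^ swapsAt g (h v)) := by
  rw [swapsAt, Equiv.Perm.mul_apply, Equiv.Perm.mul_apply, hh.apply_append, hg.apply_append]
  cases swapsAt h v <;> cases swapsAt g (h v) <;> simp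

theorem mul (hg : IsTreeAut g) (hh : IsTreeAut h) : IsTreeAut (g * h) :=
  ⟨by simp [hh.1, hg.1], fun s b => ⟨b ^^ swapsAt h s ^^ swapsAt g (h s), by
    simp [hh.apply_append, hg.apply_append]⟩⟩

theorem swapBit_mul (hg : IsTreeAut g) (hh : IsTreeAut h) (v : List Bool) :
    swapBit (g * h) v = swapBit g (h v) + swapBit h v := by
  simp only [swapBit_eq_ite, hg.swapsAt_mul hh]
  cases swapsAt h v <;> cases swapsAt g (h v) <;> decide

end IsTreeAut

def levelSet (n : ℕ) : Finset (List Bool) :=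
  Finset.univ.image (List.ofFn : (Fin n → Bool) → List Bool)

theorem mem_levelSet {n : ℕ} {v : List Bool} : v ∈ levelSet n ↔ v.length = n := by
  simp only [levelSet, Finset.mem_image, Finset.mem_univ, true_and]
  constructor
  · rintro ⟨f, rfl⟩
    exact List.length_ofFn
  · rintro rfl
    exact ⟨v.get, List.ofFn_get v⟩

theorem levelSet_zero : levelSet 0 = {[]} := by
  ext v
  simp [mem_levelSet]

theorem phiLevel_eq_sum (n : ℕ) (σ : Equiv.Perm (List Bool)) :
    phiLevel n σ = ∑ v ∈ levelSet (n - 1), swapBit σ v := by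
  rw [levelSet, Finset.sum_image fun _ _ _ _ h => List.ofFn_injective h]
  rfl

theorem phiLevel_one (σ : Equiv.Perm (List Bool)) : phiLevel 1 σ = swapBit σ [] := by
  rw [phiLevel_eq_sum, levelSet_zero, Finset.sum_singleton]

def subtreeLevel (b : Bool) (n : ℕ) : Finset (List Bool) :=
  {v ∈ levelSet (n + 1) | v.head? = some b}

theorem mem_subtreeLevel {b : Bool} {n : ℕ} {v : List Bool} :
    v ∈ subtreeLevel b n ↔ v.length = n + 1 ∧ v.head? = some b := by
  rw [subtreeLevel, Finset.mem_filter, mem_levelSet]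

theorem sum_levelSet_succ {M : Type*} [AddCommMonoid M] (f : List Bool → M) (n : ℕ) :
    ∑ v ∈ levelSet (n + 1), f v =
      ∑ v ∈ subtreeLevel false n, f v + ∑ v ∈ subtreeLevel true n, f v := by
  rw [subtreeLevel, subtreeLevel, ← Finset.sum_filter_add_sum_filter_not _ (·.head? = some false)]
  congr 2
  refine Finset.filter_congr fun v hv => ?_
  obtain ⟨c, w, rfl⟩ := List.exists_cons_of_length_eq_add_one (mem_levelSet.mp hv)
  cases c <;> simp

namespace IsTreeAut

variable {g h : Equiv.Perm (List Bool)} {M : Type*} [AddCommMonoid M]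

theorem sum_levelSet_comp (hg : IsTreeAut g) (f : List Bool → M) (n : ℕ) :
    ∑ v ∈ levelSet n, f (g v) = ∑ v ∈ levelSet n, f v :=
  Finset.sum_equiv g (fun v => by simp only [mem_levelSet, hg.length_apply]) fun _ _ => rfl

theorem sum_subtreeLevel_comp (hg : IsTreeAut g) (f : List Bool → M) (b : Bool) (n : ℕ) :
    ∑ v ∈ subtreeLevel b n, f (g v) = ∑ v ∈ subtreeLevel (b ^^ swapsAt g []) n, f v :=
  Finset.sum_equiv g (fun v => by simp [mem_subtreeLevel, hg.length_apply, hg.head?_apply])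
    fun _ _ => rfl

theorem phiLevel_mul (hg : IsTreeAut g) (hh : IsTreeAut h) (n : ℕ) :
    phiLevel n (g * h) = phiLevel n g + phiLevel n h := by
  simp only [phiLevel_eq_sum, hg.swapBit_mul hh, Finset.sum_add_distrib, hh.sum_levelSet_comp]

theorem psiMap_mul (hg : IsTreeAut g) (hh : IsTreeAut h) :
    psiMap (g * h) = psiMap g + psiMap h :=
  funext fun n => hg.phiLevel_mul hh (n + 1)

theorem psiMap_eq_zero_of_commute (hg : IsTreeAut g) (hh : IsTreeAut h) (hgh : g * h = h * g)
    (hg₀ : swapsAt g [] = true) (hh₀ : swapsAt h [] = false) : psiMap h = 0 := by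
  funext n
  cases n with
  | zero => simpa [psiMap, phiLevel_one, swapBit_eq_ite] using hh₀
  | succ n =>
    have halves :
        ∑ v ∈ subtreeLevel false n, swapBit h v = ∑ v ∈ subtreeLevel true n, swapBit h v := by
      have hsum := congrArg (fun k => ∑ v ∈ subtreeLevel false n, swapBit k v) hgh
      simp only [hg.swapBit_mul hh, hh.swapBit_mul hg, Finset.sum_add_distrib,
        hg.sum_subtreeLevel_comp, hh.sum_subtreeLevel_comp, hg₀, hh₀, Bool.false_xor] at hsum
      linear_combination hsum
    change phiLevel (n + 1 + 1) h = 0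
    rw [phiLevel_eq_sum, Nat.add_sub_cancel, sum_levelSet_succ, halves, CharTwo.add_self_eq_zero]

theorem psiMap_eq_smul_of_commute (hg : IsTreeAut g) (hh : IsTreeAut h) (hgh : g * h = h * g)
    (hg₀ : swapsAt g [] = true) : psiMap h = swapBit h [] • psiMap g := by
  cases hh₀ : swapsAt h []
  · simp [swapBit_eq_ite, hh₀, hg.psiMap_eq_zero_of_commute hh hgh hg₀ hh₀]
  · have hgh₀ : swapsAt (g * h) [] = false := by simp [hg.swapsAt_mul hh, hh.1, hg₀, hh₀]
    have hsum := hg.psiMap_eq_zero_of_commute (hg.mul hh) (by rw [mul_assoc, hgh]) hg₀ hgh₀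
    rw [hg.psiMap_mul hh] at hsum
    rw [swapBit_eq_ite, hh₀, if_pos rfl, one_smul, eq_neg_of_add_eq_zero_right hsum]
    exact funext fun n => ZMod.neg_eq_self_mod_two _

end IsTreeAut

/-- If `σ, τ` are automorphisms of the infinite rooted binary tree with `φ_1(σ) = 1` and
`ψ(σ), ψ(τ)` linearly independent over `𝔽₂` in `∏_{n ≥ 1} 𝔽₂`, then `σ` and `τ` do not
commute. -/
theorem not_commute_of_linearIndependent (σ τ : Equiv.Perm (List Bool))
    (hσ : IsTreeAut σ) (hτ : IsTreeAut τ) (h1 : phiLevel 1 σ = 1)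
    (hind : LinearIndependent (ZMod 2) ![psiMap σ, psiMap τ]) :
    σ * τ ≠ τ * σ := by
  intro hστ
  have hσ₀ : swapsAt σ [] = true := by simpa [phiLevel_one, swapBit_eq_ite] using h1
  have hψσ : psiMap σ ≠ 0 := by simpa using hind.ne_zero 0
  exact (LinearIndependent.pair_iff' hψσ).mp hind _ (hσ.psiMap_eq_smul_of_commute hτ hστ hσ₀).symm
end

section
/- The dynamical Galois group G_3(x² − 1, −1/2) over Q is non-abelian; equivalently, the Galois group of the splitting field of (x²−1)∘(x²−1)∘(x²−1) + 1/2 over Q is not abelian. -/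
/-!
Write `P = f³ + 1/2 = X⁸ - 4X⁶ + 4X⁴ - 1/2`. Its reverse is `-1/2 · (X⁸ - 8X⁴ + 8X² - 2)`,
which is Eisenstein at `2`, so `P` is irreducible and its Galois group acts transitively on
its roots. By the intermediate value theorem `P` has a real root `x` and a purely imaginary
root `z = t i`. If the group were abelian, complex conjugation, which fixes `x`, would fix
every root `g • x` and hence `z`, which is absurd.
-/

open Polynomial

theorem MulAction.smul_eq_self_of_forall_commute {G α : Type*} [Monoid G] [MulAction G α]
    [MulAction.IsPretransitive G α] {g : G} (hg : ∀ h : G, Commute g h) {a : α}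
    (ha : g • a = a) (b : α) : g • b = b := by
  obtain ⟨h, rfl⟩ := MulAction.exists_smul_eq G a b
  rw [smul_smul, (hg h).eq, mul_smul, ha]

namespace Polynomial

theorem natDegree_reverse_of_coeff_zero_ne_zero {R : Type*} [Semiring R] {f : R[X]}
    (hf : f.coeff 0 ≠ 0) : f.reverse.natDegree = f.natDegree := by
  rw [reverse_natDegree, natTrailingDegree_eq_zero.mpr (Or.inr hf), Nat.sub_zero]

theorem isUnit_reverse_iff {K : Type*} [Field K] {f : K[X]} (hf : f.coeff 0 ≠ 0) :
    IsUnit f.reverse ↔ IsUnit f := by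
  have hf₀ : f ≠ 0 := by rintro rfl; exact hf (coeff_zero 0)
  rw [isUnit_iff_degree_eq_zero, isUnit_iff_degree_eq_zero, degree_eq_natDegree hf₀,
    degree_eq_natDegree (mt reverse_eq_zero.mp hf₀), natDegree_reverse_of_coeff_zero_ne_zero hf]

theorem irreducible_of_irreducible_reverse {K : Type*} [Field K] {f : K[X]}
    (hf : f.coeff 0 ≠ 0) (h : Irreducible f.reverse) : Irreducible f where
  not_isUnit := (isUnit_reverse_iff hf).not.mp h.not_isUnit
  isUnit_or_isUnit a b hab := by
    subst hab
    have hab : a.coeff 0 * b.coeff 0 ≠ 0 := by rwa [← mul_coeff_zero]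
    rw [← isUnit_reverse_iff (left_ne_zero_of_mul hab),
      ← isUnit_reverse_iff (right_ne_zero_of_mul hab)]
    exact h.isUnit_or_isUnit (reverse_mul_of_domain a b)

theorem exists_aeval_eq_zero_of_mem_Icc {R : Type*} [CommSemiring R] [Algebra R ℝ] {p : R[X]}
    {a b : ℝ} (hab : a ≤ b) (ha : aeval a p ≤ 0) (hb : 0 ≤ aeval b p) :
    ∃ x ∈ Set.Icc a b, aeval x p = 0 :=
  intermediate_value_Icc hab p.continuousOn_aeval ⟨ha, hb⟩

theorem Gal.exists_mul_ne_mul_of_real_root_of_nonreal_root {p : ℚ[X]} (hp : Irreducible p)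
    {x : ℝ} (hx : aeval x p = 0) {z : ℂ} (hz : aeval z p = 0) (hz_im : z.im ≠ 0) :
    ∃ σ τ : p.Gal, σ * τ ≠ τ * σ := by
  have := Gal.splits_ℚ_ℂ (p := p)
  have := Gal.galAction_isPretransitive p ℂ hp
  have hx' : aeval (x : ℂ) p = 0 := by
    rw [← Complex.coe_algebraMap, aeval_algebraMap_apply, hx, map_zero]
  let xr : p.rootSet ℂ := ⟨x, mem_rootSet.mpr ⟨hp.ne_zero, hx'⟩⟩
  let zr : p.rootSet ℂ := ⟨z, mem_rootSet.mpr ⟨hp.ne_zero, hz⟩⟩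
  let conj := restrict p ℂ (Complex.conjAe.restrictScalars ℚ)
  have hconj_xr : conj • xr = xr := Subtype.ext (by simp [conj, xr])
  by_contra! hcomm
  have hconj_z := congrArg Subtype.val
    (MulAction.smul_eq_self_of_forall_commute (hcomm conj) hconj_xr zr)
  rw [restrict_smul] at hconj_z
  exact hz_im (Complex.conj_eq_iff_im.mp hconj_z)

end Polynomial

theorem iterate_three_xsq_sub_one_add_half :
    ((X ^ 2 - 1 : ℚ[X]).comp (X ^ 2 - 1)).comp (X ^ 2 - 1) + C (1 / 2) =
      X ^ 8 - 4 * X ^ 6 + 4 * X ^ 4 - C (1 / 2) := by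
  have h : C (1 / 2 : ℚ) + C (1 / 2) = 1 := by rw [← C_add]; norm_num
  simp only [sub_comp, pow_comp, X_comp, one_comp]
  linear_combination h

theorem irreducible_int_octic : Irreducible (X ^ 8 - 8 * X ^ 4 + 8 * X ^ 2 - 2 : ℤ[X]) := by
  have hmonic : (X ^ 8 - 8 * X ^ 4 + 8 * X ^ 2 - 2 : ℤ[X]).Monic := by monicity!
  have hdeg : (X ^ 8 - 8 * X ^ 4 + 8 * X ^ 2 - 2 : ℤ[X]).natDegree = 8 := by
    compute_degree!
  refine (hmonic.isEisensteinAt_of_mem_of_notMem ?_ ?_ ?_).irreducible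
    ((Ideal.span_singleton_prime two_ne_zero).mpr Int.prime_two) hmonic.isPrimitive (by omega)
  · rw [Ideal.ne_top_iff_one, Ideal.mem_span_singleton]; decide
  · intro n hn
    rw [hdeg] at hn
    interval_cases n <;> simp [coeff_X_pow, Ideal.mem_span_singleton]
  · simp [Ideal.span_singleton_pow, Ideal.mem_span_singleton]

theorem reverse_octic : (X ^ 8 - 4 * X ^ 6 + 4 * X ^ 4 - C (1 / 2) : ℚ[X]).reverse =
    C (-1 / 2) * (X ^ 8 - 8 * X ^ 4 + 8 * X ^ 2 - 2) := by
  have hdeg : (X ^ 8 - 4 * X ^ 6 + 4 * X ^ 4 - C (1 / 2) : ℚ[X]).natDegree = 8 := by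
    compute_degree!
  have hdeg' : (C (-1 / 2) * (X ^ 8 - 8 * X ^ 4 + 8 * X ^ 2 - 2) : ℚ[X]).natDegree ≤ 8 := by
    compute_degree
  ext n
  rw [coeff_reverse, hdeg]
  rcases le_or_gt n 8 with hn | hn
  · interval_cases n <;> norm_num [coeff_X_pow, coeff_C]
  · rw [revAt_eq_self_of_lt hn, coeff_eq_zero_of_natDegree_lt (hdeg.trans_lt hn),
      coeff_eq_zero_of_natDegree_lt (hdeg'.trans_lt hn)]

theorem irreducible_octic : Irreducible (X ^ 8 - 4 * X ^ 6 + 4 * X ^ 4 - C (1 / 2) : ℚ[X]) := by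
  have hq : Irreducible (X ^ 8 - 8 * X ^ 4 + 8 * X ^ 2 - 2 : ℚ[X]) := by
    simpa using (IsPrimitive.Int.irreducible_iff_irreducible_map_cast
      (Monic.isPrimitive (by monicity!))).mp irreducible_int_octic
  refine irreducible_of_irreducible_reverse (by simp) ?_
  rw [reverse_octic]
  exact (associated_unit_mul_left _ _ (isUnit_C.mpr (by norm_num))).symm.irreducible hq

theorem exists_real_root_octic :
    ∃ x : ℝ, aeval x (X ^ 8 - 4 * X ^ 6 + 4 * X ^ 4 - C (1 / 2) : ℚ[X]) = 0 := by
  refine (exists_aeval_eq_zero_of_mem_Icc (a := 0) (b := 2) zero_le_two ?_ ?_).imp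
    fun _ ↦ And.right
  all_goals norm_num [map_ofNat]

theorem aeval_mul_I_octic (t : ℝ) :
    aeval (t * Complex.I) (X ^ 8 - 4 * X ^ 6 + 4 * X ^ 4 - C (1 / 2) : ℚ[X]) =
      (aeval t (X ^ 8 + 4 * X ^ 6 + 4 * X ^ 4 - C (1 / 2) : ℚ[X]) : ℂ) := by
  have h8 : Complex.I ^ 8 = 1 := by rw [show 8 = 2 * 4 by rfl, pow_mul, Complex.I_sq]; norm_num
  have h6 : Complex.I ^ 6 = -1 := by rw [show 6 = 2 * 3 by rfl, pow_mul, Complex.I_sq]; norm_num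
  simp [mul_pow, Complex.I_pow_four, h8, h6, map_ofNat]

theorem exists_nonreal_root_octic :
    ∃ z : ℂ, aeval z (X ^ 8 - 4 * X ^ 6 + 4 * X ^ 4 - C (1 / 2) : ℚ[X]) = 0 ∧ z.im ≠ 0 := by
  obtain ⟨t, -, ht⟩ := exists_aeval_eq_zero_of_mem_Icc
    (p := (X ^ 8 + 4 * X ^ 6 + 4 * X ^ 4 - C (1 / 2) : ℚ[X])) zero_le_one
    (by norm_num [map_ofNat]) (by norm_num [map_ofNat])
  refine ⟨t * Complex.I, by rw [aeval_mul_I_octic, ht, Complex.ofReal_zero], ?_⟩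
  rw [Complex.mul_I_im, Complex.ofReal_re]
  rintro rfl
  norm_num at ht

/-- The dynamical Galois group `G_3(x² − 1, −1/2)` over `ℚ`, i.e. the Galois group of the
splitting field of `f³(x) + 1/2` where `f = x² − 1`, is not abelian. -/
theorem G3_xsq_sub_one_neg_half_not_abelian :
    ∃ σ τ : (((X ^ 2 - 1 : ℚ[X]).comp (X ^ 2 - 1)).comp (X ^ 2 - 1) + C (1/2 : ℚ)).Gal,
      σ * τ ≠ τ * σ := by
  rw [iterate_three_xsq_sub_one_add_half]
  obtain ⟨x, hx⟩ := exists_real_root_octic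
  obtain ⟨z, hz, hz_im⟩ := exists_nonreal_root_octic
  exact Gal.exists_mul_ne_mul_of_real_root_of_nonreal_root irreducible_octic hx hz hz_im
end

section
/- Let K be a number field, φ = f/g ∈ K(x) with f, g coprime polynomials and deg f > deg g + 1, and α ∈ K. Then there exists a real constant H > 0 such that every algebraic number γ with φ^n(γ) = α for some n ≥ 1 satisfies |σ(γ)| ≤ H for every embedding σ of Q(γ) into C; i.e., the houses of all elements of the backward orbit of α are uniformly bounded. -/
open Polynomial

/-- `γ` is an `n`-fold preimage of `w` under the rational map `φ = f/g` over `ℂ`: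
there is a chain `w = z_0, z_1, …, z_n = γ` with `φ(z_{k+1}) = z_k`, where `φ(z) = w`
is encoded as `f(z) = w · g(z)` (for `f, g` coprime this is equivalent, since they have
no common root). -/
def IsIteratedPreimage (f g : ℂ[X]) (w : ℂ) (n : ℕ) (γ : ℂ) : Prop :=
  ∃ z : ℕ → ℂ, z 0 = w ∧ z n = γ ∧
    ∀ k : ℕ, k < n → (f.eval (z (k + 1)) = z k * g.eval (z (k + 1)))

/-!
Because `deg f ≥ deg g + 2`, for every embedding `τ : K → ℂ` the conjugate map `φ^τ = f^τ / g^τ`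
satisfies `|φ^τ(z)| > |z|` outside some disc of radius `R_τ`, so a backward chain starting at
`τ(α)` never leaves the disc of radius `max(R_τ, |τ(α)|)`. The points of a backward chain of
`ι(α)` are algebraic numbers, and a `ℚ`-embedding `σ` of the algebraic numbers into `ℂ` sending
`γ` to its conjugate `γ'` carries the chain to a backward chain of `τ(α)` ending at `γ'`, with
`τ = σ ∘ ι`. As `K` has only finitely many embeddings, the radii have a common bound.
-/

open Filter Bornology

namespace Polynomial

variable {𝕜 : Type*} [NormedField 𝕜]

theorem eventually_cobounded_norm_mul_norm_eval_lt_norm_eval {p q : 𝕜[X]}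
    (hdeg : q.natDegree + 1 < p.natDegree) :
    ∀ᶠ z in cobounded 𝕜, ‖z‖ * ‖q.eval z‖ < ‖p.eval z‖ := by
  have hlt : (X * q).degree < p.degree := degree_lt_degree <| by
    have := natDegree_mul_le (p := X) (q := q)
    rw [natDegree_X] at this
    omega
  have hpos : ∀ᶠ z in cobounded 𝕜, 0 < ‖p.eval z‖ :=
    (p.tendsto_norm_atTop (natDegree_pos_iff_degree_pos.mp (by omega))
      tendsto_norm_cobounded_atTop).eventually_gt_atTop 0
  simpa using (isLittleO_cobounded_of_degree_lt hlt).eventuallyLT_norm_of_eventually_pos hpos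

theorem norm_le_max_of_eval_eq_mul_eval {p q : 𝕜[X]} {R : ℝ}
    (hR : ∀ z, R ≤ ‖z‖ → ‖z‖ * ‖q.eval z‖ < ‖p.eval z‖) {w z : 𝕜}
    (h : p.eval z = w * q.eval z) : ‖z‖ ≤ max R ‖w‖ := by
  by_contra! hz
  have := hR z (le_max_left _ _ |>.trans hz.le)
  rw [h, norm_mul] at this
  exact this.not_ge (by gcongr; exact (le_max_right _ _).trans hz.le)

end Polynomial

theorem IsIteratedPreimage.norm_le_max {p q : ℂ[X]} {R : ℝ}
    (hR : ∀ z, R ≤ ‖z‖ → ‖z‖ * ‖q.eval z‖ < ‖p.eval z‖) {w γ : ℂ} {n : ℕ}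
    (h : IsIteratedPreimage p q w n γ) : ‖γ‖ ≤ max R ‖w‖ := by
  obtain ⟨z, rfl, rfl, hz⟩ := h
  suffices ∀ k ≤ n, ‖z k‖ ≤ max R ‖z 0‖ from this n le_rfl
  intro k hk
  induction k with
  | zero => exact le_max_right _ _
  | succ k ih =>
    calc ‖z (k + 1)‖ ≤ max R ‖z k‖ := norm_le_max_of_eval_eq_mul_eval hR (hz k hk)
      _ ≤ max R ‖z 0‖ := max_le (le_max_left _ _) (ih (by omega))

theorem exists_norm_le_of_isIteratedPreimage {p q : ℂ[X]}
    (hdeg : q.natDegree + 1 < p.natDegree) (w : ℂ) :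
    ∃ R : ℝ, ∀ n γ, IsIteratedPreimage p q w n γ → ‖γ‖ ≤ R := by
  obtain ⟨R, -, hR⟩ := hasBasis_cobounded_norm.eventually_iff.mp
    (eventually_cobounded_norm_mul_norm_eval_lt_norm_eval hdeg)
  exact ⟨max R ‖w‖, fun _ _ h => h.norm_le_max hR⟩

section algebraicClosure

variable {F E : Type*} [Field F] [Field E] [Algebra F E]

theorem mem_algebraicClosure_of_aeval_eq_mul_aeval {p q : (algebraicClosure F E)[X]}
    (hpq : q.natDegree < p.natDegree) {w z : E} (hw : w ∈ algebraicClosure F E)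
    (h : aeval z p = w * aeval z q) : z ∈ algebraicClosure F E := by
  have hne : p - C ⟨w, hw⟩ * q ≠ 0 := by
    rw [sub_ne_zero]
    rintro rfl
    exact (natDegree_C_mul_le _ _).not_gt hpq
  have hroot : aeval z (p - C ⟨w, hw⟩ * q) = 0 := by
    simp [h]
  exact isIntegral_trans z (IsAlgebraic.isIntegral ⟨_, hne, hroot⟩)

theorem exists_algHom_apply_eq_of_minpoly_eq [IsAlgClosed E] (x : algebraicClosure F E) {y : E}
    (h : minpoly F y = minpoly F (x : E)) : ∃ σ : algebraicClosure F E →ₐ[F] E, σ x = y := by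
  have hx : minpoly F (x : E) = minpoly F x :=
    minpoly.algebraMap_eq (algebraMap (algebraicClosure F E) E).injective x
  rw [hx] at h
  have : y ∈ (minpoly F x).rootSet E := by
    rw [mem_rootSet, ← h]
    exact ⟨h ▸ minpoly.ne_zero (Algebra.IsIntegral.isIntegral x), minpoly.aeval F y⟩
  rwa [← Algebra.IsAlgebraic.range_eval_eq_rootSet_minpoly] at this

end algebraicClosure

theorem IsIteratedPreimage.exists_chain_algebraicClosure {F : Type*} [Field F] [Algebra F ℂ]
    {p q : (algebraicClosure F ℂ)[X]} (hpq : q.natDegree < p.natDegree)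
    {w : algebraicClosure F ℂ} {n : ℕ} {γ : ℂ}
    (h : IsIteratedPreimage (p.map (algebraMap _ ℂ)) (q.map (algebraMap _ ℂ)) w n γ) :
    ∃ z : ℕ → algebraicClosure F ℂ, z 0 = w ∧ (z n : ℂ) = γ ∧
      ∀ k < n, p.eval (z (k + 1)) = z k * q.eval (z (k + 1)) := by
  obtain ⟨z, hz0, rfl, hz⟩ := h
  have hmem : ∀ k ≤ n, z k ∈ algebraicClosure F ℂ := by
    intro k hk
    induction k with
    | zero => exact hz0 ▸ w.2
    | succ k ih =>
      refine mem_algebraicClosure_of_aeval_eq_mul_aeval hpq (ih (by omega)) ?_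
      simpa only [aeval_def, eval₂_eq_eval_map] using hz k hk
  -- past index `n` the chain is unconstrained, so it is frozen at `z n`
  refine ⟨fun k => ⟨z (min k n), hmem _ (min_le_right _ _)⟩, ?_, by simp, fun k hk => ?_⟩
  · ext; simpa using hz0
  · apply (algebraMap (algebraicClosure F ℂ) ℂ).injective
    rw [map_mul, ← eval_map_apply, ← eval_map_apply]
    simpa only [IntermediateField.algebraMap_apply, min_eq_left hk.le,
      min_eq_left (Nat.succ_le_of_lt hk)] using hz k hk

theorem isIteratedPreimage_map_of_chain {S : Type*} [CommRing S] (σ : S →+* ℂ) {p q : S[X]}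
    {n : ℕ} {z : ℕ → S} (hz : ∀ k < n, p.eval (z (k + 1)) = z k * q.eval (z (k + 1))) :
    IsIteratedPreimage (p.map σ) (q.map σ) (σ (z 0)) n (σ (z n)) :=
  ⟨fun k => σ (z k), rfl, rfl, fun k hk => by simp [hz k hk]⟩

theorem house_bounded_on_backward_orbit_general (K : Type*) [Field K] [NumberField K]
    (ι : K →+* ℂ) (f g : K[X])
    (hdeg : g.natDegree + 1 < f.natDegree) (α : K) :
    ∃ H : ℝ, 0 < H ∧ ∀ (n : ℕ) (γ : ℂ), 1 ≤ n →
      IsIteratedPreimage (f.map ι) (g.map ι) (ι α) n γ →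
      ∀ γ' : ℂ, minpoly ℚ γ' = minpoly ℚ γ → ‖γ'‖ ≤ H := by
  have hbound (τ : K →+* ℂ) : ∃ R : ℝ, ∀ n γ,
      IsIteratedPreimage (f.map τ) (g.map τ) (τ α) n γ → ‖γ‖ ≤ R :=
    exists_norm_le_of_isIteratedPreimage (by simpa using hdeg) _
  choose R hR using hbound
  obtain ⟨H, hH⟩ := Finite.bddAbove_range R
  refine ⟨max H 1, by positivity, fun n γ _ hγ γ' hγ' => ?_⟩
  let ιM : K →+* algebraicClosure ℚ ℂ :=
    ι.codRestrict _ fun x => (Algebra.IsIntegral.isIntegral x).map ι.toRatAlgHom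
  obtain ⟨z, hz0, hzn, hz⟩ := IsIteratedPreimage.exists_chain_algebraicClosure
    (p := f.map ιM) (q := g.map ιM) (w := ιM α) (by rw [natDegree_map, natDegree_map]; omega)
    (by rw [Polynomial.map_map, Polynomial.map_map]; exact hγ)
  obtain ⟨σ, hσ⟩ := exists_algHom_apply_eq_of_minpoly_eq (z n) <| by
    rw [hγ', hzn]
  have hγ'_preimage := isIteratedPreimage_map_of_chain (σ : algebraicClosure ℚ ℂ →+* ℂ) hz
  rw [Polynomial.map_map, Polynomial.map_map, hz0] at hγ'_preimage
  exact (hR _ n γ' (hσ ▸ hγ'_preimage)).trans ((hH ⟨_, rfl⟩).trans (le_max_left _ _))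

/-- Let `K` be a number field embedded in `ℂ`, `φ = f/g` with `f, g ∈ K[x]` coprime and
`deg f > deg g + 1`, and `α ∈ K`. Then the houses of the elements of the backward orbit
of `α` under `φ` are uniformly bounded: there is `H > 0` such that every `γ` with
`φ^n(γ) = α` for some `n ≥ 1` satisfies `|γ'| ≤ H` for every conjugate `γ'` of `γ` over
`ℚ` (i.e. for every embedding of `ℚ(γ)` into `ℂ`). -/
theorem house_bounded_on_backward_orbit (K : Type*) [Field K] [NumberField K]
    (ι : K →+* ℂ) (f g : K[X]) (hcop : IsCoprime f g)
    (hdeg : g.natDegree + 1 < f.natDegree) (α : K) :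
    ∃ H : ℝ, 0 < H ∧ ∀ (n : ℕ) (γ : ℂ), 1 ≤ n →
      IsIteratedPreimage (f.map ι) (g.map ι) (ι α) n γ →
      ∀ γ' : ℂ, minpoly ℚ γ' = minpoly ℚ γ → ‖γ'‖ ≤ H :=
  house_bounded_on_backward_orbit_general K ι f g hdeg α
end

section
/- Let d ≥ 2 and ζ a root of unity, and let f(x) = −T_d(x) where T_d is the Chebyshev polynomial of degree d. Then the dynamical Galois group G_∞(−T_d, ζ + ζ⁻¹) over Q is abelian, i.e., all iterated preimages of ζ + ζ⁻¹ under −T_d lie in Q^ab. -/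
/-!
If `γ = μ + μ⁻¹`, then `−T_d(γ) = −(μ^d + μ^{-d})`. So if `−T_d(γ) = η + η⁻¹` with `η` a root of
unity, then `μ^d + μ^{-d} = (−η) + (−η)⁻¹`, whence `μ^{±d} = −η` and `μ` is a root of unity.
By induction every iterated preimage of `ζ + ζ⁻¹` is of the form `μ + μ⁻¹` with `μ` a root of
unity, so it lies in the field `ℚ(μ_∞)` generated by all roots of unity, which is abelian Galois
over `ℚ`. Automorphisms of any subfield of `ℚ(μ_∞)` extend to `ℚ(μ_∞)` by normality, hence
commute.
-/

open Polynomial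

theorem IsOfFinOrder.neg {M : Type*} [Monoid M] [HasDistribNeg M] {x : M}
    (h : IsOfFinOrder x) : IsOfFinOrder (-x) :=
  (by simpa only [neg_sq] using h.pow (n := 2) : IsOfFinOrder ((-x) ^ 2)).of_pow two_ne_zero

theorem eq_or_inv_eq_of_add_inv_eq_add_inv {K : Type*} [Field K] {a b : K} (ha : a ≠ 0)
    (hb : b ≠ 0) (h : a + a⁻¹ = b + b⁻¹) : a = b ∨ a⁻¹ = b := by
  have : (a - b) * (a * b - 1) = 0 := by
    field_simp at h
    linear_combination h
  rcases mul_eq_zero.mp this with h | h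
  · exact .inl (sub_eq_zero.mp h)
  · exact .inr (inv_eq_of_mul_eq_one_right (sub_eq_zero.mp h))

theorem exists_ne_zero_add_inv_eq {K : Type*} [Field K] [IsAlgClosed K] (γ : K) :
    ∃ μ ≠ 0, μ + μ⁻¹ = γ := by
  have hdeg : (X ^ 2 - C γ * X + 1 : K[X]).degree = 2 := by compute_degree!
  obtain ⟨μ, hμ⟩ := IsAlgClosed.exists_root _ (hdeg ▸ two_ne_zero)
  have hμ : μ * μ - γ * μ + 1 = 0 := by simpa [sq] using hμ
  have hμ0 : μ ≠ 0 := by rintro rfl; simp at hμ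
  refine ⟨μ, hμ0, ?_⟩
  field_simp
  linear_combination hμ

section RootOfUnityAddInv

variable {K : Type*} [Field K]

def IsRootOfUnityAddInv (γ : K) : Prop := ∃ μ : K, IsOfFinOrder μ ∧ μ + μ⁻¹ = γ

variable [IsAlgClosed K] {d : ℕ} {f : K → K}

theorem IsRootOfUnityAddInv.of_neg_chebyshev (hd : d ≠ 0)
    (hf : ∀ x ≠ 0, f (x + x⁻¹) = -(x ^ d + x⁻¹ ^ d)) {γ : K}
    (h : IsRootOfUnityAddInv (f γ)) : IsRootOfUnityAddInv γ := by
  obtain ⟨η, hη, hηγ⟩ := h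
  obtain ⟨μ, hμ0, rfl⟩ := exists_ne_zero_add_inv_eq γ
  have key : μ ^ d + (μ ^ d)⁻¹ = -η + (-η)⁻¹ := by
    rw [hf μ hμ0, inv_pow] at hηγ
    rw [inv_neg, ← neg_add, hηγ, neg_neg]
  have hη0 : -η ≠ 0 := neg_ne_zero.mpr hη.isUnit.ne_zero
  rcases eq_or_inv_eq_of_add_inv_eq_add_inv (pow_ne_zero d hμ0) hη0 key with h | h
  · exact ⟨μ, (h ▸ hη.neg).of_pow hd, rfl⟩
  · refine ⟨μ⁻¹, (by rw [inv_pow, h]; exact hη.neg : IsOfFinOrder (μ⁻¹ ^ d)).of_pow hd, ?_⟩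
    rw [inv_inv, add_comm]

theorem IsRootOfUnityAddInv.of_iterate_neg_chebyshev (hd : d ≠ 0)
    (hf : ∀ x ≠ 0, f (x + x⁻¹) = -(x ^ d + x⁻¹ ^ d)) (n : ℕ) {γ : K}
    (h : IsRootOfUnityAddInv (f^[n] γ)) : IsRootOfUnityAddInv γ := by
  induction n generalizing γ with
  | zero => exact h
  | succ n ih =>
    rw [Function.iterate_succ_apply] at h
    exact (ih h).of_neg_chebyshev hd hf

end RootOfUnityAddInv

theorem AlgEquiv.mul_comm_of_isMulCommutative_normal {F K E : Type*} [Field F] [Field K]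
    [Field E] [Algebra F K] [Algebra F E] [Algebra K E] [IsScalarTower F K E] [Normal F E]
    [IsMulCommutative Gal(E/F)] (σ τ : K ≃ₐ[F] K) : σ * τ = τ * σ := by
  ext x
  apply (algebraMap K E).injective
  have h := congr($(mul_comm' (σ.liftNormal E) (τ.liftNormal E)) (algebraMap K E x))
  simpa only [AlgEquiv.mul_apply, AlgEquiv.liftNormal_commutes] using h

-- `∈ Set.univ` matches the shape of `IsCyclotomicExtension.adjoin_roots` for `S = Set.univ`.
noncomputable def cyclotomicClosure : IntermediateField ℚ ℂ :=
  IntermediateField.adjoin ℚ {b : ℂ | ∃ n ∈ (Set.univ : Set ℕ), n ≠ 0 ∧ b ^ n = 1}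

instance : IsCyclotomicExtension Set.univ ℚ cyclotomicClosure :=
  IntermediateField.isCyclotomicExtension_adjoin_of_exists_isPrimitiveRoot _ _ _
    fun n _ hn => ⟨_, Complex.isPrimitiveRoot_exp n hn⟩

instance : IsAbelianGalois ℚ cyclotomicClosure :=
  IsCyclotomicExtension.isAbelianGalois Set.univ ℚ _

theorem IsOfFinOrder.mem_cyclotomicClosure {μ : ℂ} (h : IsOfFinOrder μ) :
    μ ∈ cyclotomicClosure := by
  obtain ⟨n, hn, hμ⟩ := isOfFinOrder_iff_pow_eq_one.mp h
  exact IntermediateField.subset_adjoin _ _ ⟨n, trivial, hn.ne', hμ⟩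

theorem IsRootOfUnityAddInv.mem_cyclotomicClosure {γ : ℂ} (h : IsRootOfUnityAddInv γ) :
    γ ∈ cyclotomicClosure := by
  obtain ⟨μ, hμ, rfl⟩ := h
  exact add_mem hμ.mem_cyclotomicClosure (inv_mem hμ.mem_cyclotomicClosure)

theorem inQab_of_mem_cyclotomicClosure {x : ℂ} (hx : x ∈ cyclotomicClosure) : InQab x :=
  ⟨cyclotomicClosure, hx, inferInstance, mul_comm'⟩

theorem neg_chebyshev_abelian_arboreal_general (d : ℕ) (hd : 2 ≤ d) (T : ℚ[X])
    (hT : ∀ x : ℂ, x ≠ 0 → aeval (x + x⁻¹) T = x ^ d + (x⁻¹) ^ d)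
    (ζ : ℂ) (hζ : ∃ m : ℕ, 1 ≤ m ∧ ζ ^ m = 1) :
    (∀ γ : ℂ, (∃ n : ℕ, (fun z : ℂ => -(aeval z T))^[n] γ = ζ + ζ⁻¹) → InQab γ) ∧
    (∀ σ τ : (IntermediateField.adjoin ℚ
        {γ : ℂ | ∃ n : ℕ, (fun z : ℂ => -(aeval z T))^[n] γ = ζ + ζ⁻¹}) ≃ₐ[ℚ]
        (IntermediateField.adjoin ℚ
        {γ : ℂ | ∃ n : ℕ, (fun z : ℂ => -(aeval z T))^[n] γ = ζ + ζ⁻¹}),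
      σ * τ = τ * σ) := by
  have hf : ∀ x : ℂ, x ≠ 0 → -(aeval (x + x⁻¹) T) = -(x ^ d + x⁻¹ ^ d) := fun x hx => by
    rw [hT x hx]
  have hζsum : IsRootOfUnityAddInv (ζ + ζ⁻¹) := ⟨ζ, isOfFinOrder_iff_pow_eq_one.mpr hζ, rfl⟩
  have hmem : ∀ γ ∈ {γ : ℂ | ∃ n : ℕ, (fun z : ℂ => -(aeval z T))^[n] γ = ζ + ζ⁻¹},
      γ ∈ cyclotomicClosure := by
    rintro γ ⟨n, hn⟩
    exact (IsRootOfUnityAddInv.of_iterate_neg_chebyshev (by omega) hf n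
      (hn ▸ hζsum)).mem_cyclotomicClosure
  refine ⟨fun γ hγ => inQab_of_mem_cyclotomicClosure (hmem γ hγ), ?_⟩
  let := (IntermediateField.inclusion (IntermediateField.adjoin_le_iff.mpr hmem)).toAlgebra
  have : IsScalarTower ℚ _ cyclotomicClosure := IsScalarTower.of_algebraMap_eq fun _ => rfl
  exact AlgEquiv.mul_comm_of_isMulCommutative_normal (E := cyclotomicClosure)

/-- Let `T` be the degree-`d` Chebyshev polynomial (`d ≥ 2`), characterized by
`T(x + x⁻¹) = x^d + x^{-d}`, and let `ζ` be a root of unity. Then the dynamical Galois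
group `G_∞(−T, ζ + ζ⁻¹)` over `ℚ` is abelian: all iterated preimages of `ζ + ζ⁻¹` under
`−T` lie in `ℚ^ab`. -/
theorem neg_chebyshev_abelian_arboreal (d : ℕ) (hd : 2 ≤ d) (T : ℚ[X])
    (hTdeg : T.natDegree = d)
    (hT : ∀ x : ℂ, x ≠ 0 → aeval (x + x⁻¹) T = x ^ d + (x⁻¹) ^ d)
    (ζ : ℂ) (hζ : ∃ m : ℕ, 1 ≤ m ∧ ζ ^ m = 1) :
    (∀ γ : ℂ, (∃ n : ℕ, (fun z : ℂ => -(aeval z T))^[n] γ = ζ + ζ⁻¹) → InQab γ) ∧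
    (∀ σ τ : (IntermediateField.adjoin ℚ
        {γ : ℂ | ∃ n : ℕ, (fun z : ℂ => -(aeval z T))^[n] γ = ζ + ζ⁻¹}) ≃ₐ[ℚ]
        (IntermediateField.adjoin ℚ
        {γ : ℂ | ∃ n : ℕ, (fun z : ℂ => -(aeval z T))^[n] γ = ζ + ζ⁻¹}),
      σ * τ = τ * σ) :=
  neg_chebyshev_abelian_arboreal_general d hd T hT ζ hζ
end
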